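/- Let (A, ≤, 0, 1) be a finite bounded poset and (T, R) a time frame with R reflexive. For q ∈ A^T define P(q)(s) := Min U({q(t) : t R s}) and the composed operator (P*P)(q)(s) := Min U(⋃{Min U({q(t) : t R v}) : v R s}). Then P(q)(s) ≤₂ (P*P)(q)(s) for all s ∈ T, i.e., every element of (P*P)(q)(s) lies above some element of P(q)(s). -/

import Mathlib

/-! By reflexivity, each `q t` with `t R s` lies below every minimal upper bound of
`{q t' : t' R t}`, and such a bound exists since `A` is finite with a top. Hence every upper
bound of the union in `(P*P)(q)(s)` bounds `{q t : t R s}`, and finiteness puts an element of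
`P(q)(s)` below it. -/

section
variable (A : Type*)

/-- Set of minimal upper bounds. -/
def MinU [PartialOrder A] (S : Set A) : Set A := {a | Minimal (· ∈ upperBounds S) a}

/-- Set of maximal lower bounds. -/
def MaxL [PartialOrder A] (S : Set A) : Set A := {a | Maximal (· ∈ lowerBounds S) a}

/-- An orthomodular poset: a bounded poset with an antitone involution that is a
complementation, such that orthogonal elements have a join and the orthomodular law holds. -/
structure OMP [PartialOrder A] [BoundedOrder A] where
  compl : A → A
  compl_antitone : ∀ a b : A, a ≤ b → compl b ≤ compl a
  compl_involutive : ∀ a : A, compl (compl a) = a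
  sup_compl : ∀ a : A, IsLUB {a, compl a} ⊤
  inf_compl : ∀ a : A, IsGLB {a, compl a} ⊥
  ortho_sup : ∀ a b : A, a ≤ compl b → ∃ c, IsLUB {a, b} c
  oml : ∀ a b m : A, a ≤ b → IsGLB {b, compl a} m → IsLUB {a, m} b

end

section
variable {A T : Type*} [PartialOrder A]

/-- `B ≤₁ C`: every element of `B` is below some element of `C`. -/
def le1 (B C : Set A) : Prop := ∀ b ∈ B, ∃ c ∈ C, b ≤ c

/-- `B ≤₂ C`: every element of `C` is above some element of `B`. -/
def le2 (B C : Set A) : Prop := ∀ c ∈ C, ∃ b ∈ B, b ≤ c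

/-- The tense operator `P(q)(s) := Min U({q(t) : t R s})`. -/
def Pop (R : T → T → Prop) (q : T → A) (s : T) : Set A := MinU A (q '' {t | R t s})

/-- The tense operator `F(q)(s) := Min U({q(t) : s R t})`. -/
def Fop (R : T → T → Prop) (q : T → A) (s : T) : Set A := MinU A (q '' {t | R s t})

/-- The tense operator `H(q)(s) := Max L({q(t) : t R s})`. -/
def Hop (R : T → T → Prop) (q : T → A) (s : T) : Set A := MaxL A (q '' {t | R t s})

/-- The tense operator `G(q)(s) := Max L({q(t) : s R t})`. -/
def Gop (R : T → T → Prop) (q : T → A) (s : T) : Set A := MaxL A (q '' {t | R s t})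

/-- A relation is serial if every element has a predecessor and a successor. -/
def Serial (R : T → T → Prop) : Prop := ∀ s : T, (∃ r, R r s) ∧ (∃ t, R s t)

end

section MinU
variable {A : Type*} [PartialOrder A]

theorem minU_subset_upperBounds (S : Set A) : MinU A S ⊆ upperBounds S :=
  fun _ h => h.1

theorem exists_mem_minU_le [WellFoundedLT A] {S : Set A} {c : A} (hc : c ∈ upperBounds S) :
    ∃ b ∈ MinU A S, b ≤ c := by
  obtain ⟨b, hbc, hb⟩ := exists_minimal_le_of_wellFoundedLT _ c hc
  exact ⟨b, hb, hbc⟩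

theorem minU_nonempty [OrderTop A] [WellFoundedLT A] (S : Set A) : (MinU A S).Nonempty :=
  let ⟨b, hb, _⟩ := exists_mem_minU_le (S := S) (c := ⊤) fun _ _ => le_top
  ⟨b, hb⟩

theorem le2_minU_of_subset_upperBounds [WellFoundedLT A] {S C : Set A}
    (h : C ⊆ upperBounds S) : le2 (MinU A S) C :=
  fun _ hc => exists_mem_minU_le (h hc)

theorem upperBounds_subset_of_le1 {S S' : Set A} (h : le1 S S') :
    upperBounds S' ⊆ upperBounds S := by
  intro c hc x hx
  obtain ⟨y, hy, hxy⟩ := h x hx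
  exact hxy.trans (hc hy)

theorem le1_image_biUnion_minU [OrderTop A] [WellFoundedLT A] {T : Type*}
    {R : T → T → Prop} (hR : ∀ t, R t t) (q : T → A) (s : T) :
    le1 (q '' {t | R t s}) (⋃ v ∈ {v | R v s}, MinU A (q '' {t | R t v})) := by
  rintro _ ⟨t, hts, rfl⟩
  obtain ⟨m, hm⟩ := minU_nonempty (q '' {t' | R t' t})
  exact ⟨m, Set.mem_biUnion hts hm, minU_subset_upperBounds _ hm ⟨t, hR t, rfl⟩⟩

end MinU

/-- In a finite bounded poset with a reflexive time frame, `P(q)(s) ≤₂ (P*P)(q)(s)`. -/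
theorem stmt_15 {A T : Type*} [PartialOrder A] [BoundedOrder A] [Finite A]
    (R : T → T → Prop) (hR : ∀ t, R t t) (q : T → A) :
    ∀ s : T,
      le2 (MinU A (q '' {t | R t s}))
        (MinU A (⋃ v ∈ {v | R v s}, MinU A (q '' {t | R t v}))) := fun s =>
  le2_minU_of_subset_upperBounds <|
    (minU_subset_upperBounds _).trans (upperBounds_subset_of_le1 (le1_image_biUnion_minU hR q s))
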